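/- Let H be a connected r-uniform hypergraph (r ≥ 2) on n vertices with diameter D, and let H' = H − e be a connected sub-hypergraph obtained by deleting one edge e. Then for every vertex w of H, the sum of the H'-distances from w to the r vertices of e satisfies ∑_{v ∈ e} d_{H'}(w,v) ≤ r(r−1)(D+1). -/

import Mathlib

/-- `hconn E k u v` : there is a walk of length `k` from `u` to `v` in the hypergraph
with edge set `E`, i.e. an alternating sequence of vertices and edges where consecutive
vertices both lie in the connecting edge. -/
def hconn {n : ℕ} (E : Finset (Finset (Fin n))) : ℕ → Fin n → Fin n → Prop
  | 0, u, v => u = v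
  | k + 1, u, v => ∃ e ∈ E, ∃ w ∈ e, u ∈ e ∧ hconn E k w v

/-- Distance between two vertices of a hypergraph: minimum length of a connecting walk. -/
noncomputable def hdist {n : ℕ} (E : Finset (Finset (Fin n))) (u v : Fin n) : ℕ :=
  sInf {k | hconn E k u v}

/-- Diameter of a hypergraph: maximum distance between two vertices. -/
noncomputable def hdiam {n : ℕ} (E : Finset (Finset (Fin n))) : ℕ :=
  sSup {d | ∃ u v : Fin n, hdist E u v = d}

/-- A hypergraph is connected if any two vertices are joined by a walk. -/
def HConnected {n : ℕ} (E : Finset (Finset (Fin n))) : Prop :=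
  ∀ u v : Fin n, ∃ k, hconn E k u v

/-- Degree of a vertex: the number of edges containing it. -/
def hdeg {n : ℕ} (E : Finset (Finset (Fin n))) (v : Fin n) : ℕ :=
  (E.filter (fun e => v ∈ e)).card

/-!
Let `E' = E - e` and let `α` be the least `E'`-distance from `w` to a vertex of `e`. A shortest
`E`-walk from `w` to a vertex `z` either avoids `e`, or can be cut at its first and last use of
`e`; hence every `z` with `d_{E'}(w, z) > D` lies within `E'`-distance `D - α - 1` of `e`.
Walking along a shortest `E'`-path from `w` to a vertex of `e` beyond distance `A + 2(D - α)`,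
the vertex at distance `A + (D - α) + 1` is then close to a vertex `c ∈ e` with
`A < d_{E'}(w, c) ≤ A + 2(D - α)`. So the `E'`-distances from `w` to the vertices of `e`, sorted,
start at `α` and increase by at most `2(D - α)` at each step, and their sum is at most
`r α + r (r - 1) (D - α) ≤ r (r - 1) D`.
-/

section Gaps

variable {ι : Type*} [DecidableEq ι] {s : Finset ι} {f : ι → ℕ} {m g : ℕ}

theorem exists_subset_card_eq_two_mul_sum_le {a : ι} (ha : a ∈ s) (hfa : f a ≤ m)
    (hgap : ∀ A, m ≤ A → (∃ v ∈ s, A < f v) → ∃ c ∈ s, A < f c ∧ f c ≤ A + g) :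
    ∀ k < s.card, ∃ S ⊆ s, S.card = k + 1 ∧ (∀ x ∈ S, f x ≤ m + k * g) ∧
      2 * ∑ x ∈ S, f x ≤ (k + 1) * (2 * m + g * k) := by
  intro k
  induction k with
  | zero => exact fun _ => ⟨{a}, by simpa using ha, rfl, by simpa using hfa, by simp; omega⟩
  | succ k ih =>
    intro hk
    obtain ⟨S, hSs, hScard, hSle, hSsum⟩ := ih (by omega)
    obtain ⟨v, hvs, hvS⟩ : ∃ v ∈ s, v ∉ S :=
      Finset.exists_of_ssubset (hSs.ssubset_of_ne (by rintro rfl; omega))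
    have hnew : ∃ c ∈ s, c ∉ S ∧ f c ≤ m + (k + 1) * g := by
      by_cases hv : f v ≤ m + k * g + g
      · exact ⟨v, hvs, hvS, by linarith⟩
      · obtain ⟨c, hcs, hlt, hle⟩ := hgap (m + k * g) (by omega) ⟨v, hvs, by omega⟩
        exact ⟨c, hcs, fun hcS => by linarith [hSle c hcS], by linarith⟩
    obtain ⟨c, hcs, hcS, hc⟩ := hnew
    refine ⟨insert c S, Finset.insert_subset hcs hSs, by simp [hcS, hScard], ?_, ?_⟩
    · intro x hx
      rcases Finset.mem_insert.mp hx with rfl | hx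
      · exact hc
      · linarith [hSle x hx]
    · rw [Finset.sum_insert hcS]
      nlinarith

theorem two_mul_sum_le_of_gap_le {a : ι} (ha : a ∈ s) (hfa : f a ≤ m)
    (hgap : ∀ A, m ≤ A → (∃ v ∈ s, A < f v) → ∃ c ∈ s, A < f c ∧ f c ≤ A + g) :
    2 * ∑ x ∈ s, f x ≤ s.card * (2 * m + g * (s.card - 1)) := by
  have hs : 0 < s.card := Finset.card_pos.mpr ⟨a, ha⟩
  obtain ⟨S, hSs, hScard, -, hSsum⟩ :=
    exists_subset_card_eq_two_mul_sum_le ha hfa hgap (s.card - 1) (by omega)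
  rwa [Finset.eq_of_subset_of_card_le hSs (by omega), Nat.sub_add_cancel hs] at hSsum

end Gaps

section Walks

variable {n : ℕ} {E : Finset (Finset (Fin n))}

theorem hconn_trans {k l : ℕ} {u v x : Fin n} (h1 : hconn E k u v) (h2 : hconn E l v x) :
    hconn E (k + l) u x := by
  induction k generalizing u with
  | zero => rwa [Nat.zero_add, show u = v from h1]
  | succ k ih =>
    obtain ⟨f, hf, z, hz, hu, ht⟩ := h1
    rw [Nat.add_right_comm]
    exact ⟨f, hf, z, hz, hu, ih ht⟩

theorem hconn_one_of_mem {f : Finset (Fin n)} (hf : f ∈ E) {u v : Fin n} (hu : u ∈ f)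
    (hv : v ∈ f) : hconn E 1 u v :=
  ⟨f, hf, v, hv, hu, rfl⟩

theorem hconn_symm {k : ℕ} {u v : Fin n} (h : hconn E k u v) : hconn E k v u := by
  induction k generalizing u v with
  | zero => exact (h : u = v).symm
  | succ k ih =>
    obtain ⟨f, hf, z, hz, hu, ht⟩ := h
    exact hconn_trans (ih ht) (hconn_one_of_mem hf hz hu)

theorem hdist_le {k : ℕ} {u v : Fin n} (h : hconn E k u v) : hdist E u v ≤ k :=
  Nat.sInf_le h

theorem hconn_hdist {u v : Fin n} (h : ∃ k, hconn E k u v) : hconn E (hdist E u v) u v :=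
  Nat.sInf_mem h

theorem hdist_comm (u v : Fin n) : hdist E u v = hdist E v u := by
  unfold hdist
  congr 1
  ext k
  exact ⟨hconn_symm, hconn_symm⟩

theorem hdist_triangle {u v x : Fin n} (h1 : ∃ k, hconn E k u v) (h2 : ∃ k, hconn E k v x) :
    hdist E u x ≤ hdist E u v + hdist E v x :=
  hdist_le (hconn_trans (hconn_hdist h1) (hconn_hdist h2))

theorem hdist_le_hdiam (u v : Fin n) : hdist E u v ≤ hdiam E := by
  refine le_csSup ?_ ⟨u, v, rfl⟩
  refine ((Set.finite_range fun p : Fin n × Fin n => hdist E p.1 p.2).subset ?_).bddAbove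
  rintro d ⟨x, y, rfl⟩
  exact ⟨(x, y), rfl⟩

theorem hconn_split {i k : ℕ} (hik : i ≤ k) {u v : Fin n} (h : hconn E k u v) :
    ∃ z, hconn E i u z ∧ hconn E (k - i) z v := by
  induction i generalizing k u with
  | zero => exact ⟨u, rfl, h⟩
  | succ i ih =>
    obtain ⟨k, rfl⟩ : ∃ k', k = k' + 1 := ⟨k - 1, by omega⟩
    obtain ⟨f, hf, z, hz, hu, ht⟩ := h
    obtain ⟨z', h1, h2⟩ := ih (by omega) ht
    exact ⟨z', ⟨f, hf, z, hz, hu, h1⟩, by simpa using h2⟩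

theorem exists_hdist_eq {i : ℕ} {u v : Fin n} (h : ∃ k, hconn E k u v) (hi : i ≤ hdist E u v) :
    ∃ z, hdist E u z = i := by
  obtain ⟨z, h1, h2⟩ := hconn_split hi (hconn_hdist h)
  have := hdist_triangle ⟨_, h1⟩ ⟨_, h2⟩
  exact ⟨z, by have := hdist_le h1; have := hdist_le h2; omega⟩

theorem hconn_erase_or (e : Finset (Fin n)) {k : ℕ} {u v : Fin n} (h : hconn E k u v) :
    hconn (E.erase e) k u v ∨
      ∃ c₁ ∈ e, ∃ c₂ ∈ e, ∃ p q, hconn (E.erase e) p u c₁ ∧ hconn (E.erase e) q c₂ v ∧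
        p + 1 + q ≤ k := by
  induction k generalizing u with
  | zero => exact Or.inl h
  | succ k ih =>
    obtain ⟨f, hf, z, hz, hu, ht⟩ := h
    by_cases hfe : f = e
    · subst hfe
      rcases ih ht with ht' | ⟨c₁, hc₁, c₂, hc₂, p, q, h₁, h₂, hpq⟩
      · exact Or.inr ⟨u, hu, z, hz, 0, k, rfl, ht', by omega⟩
      · exact Or.inr ⟨u, hu, c₂, hc₂, 0, q, rfl, h₂, by omega⟩
    · have hf' : f ∈ E.erase e := Finset.mem_erase.mpr ⟨hfe, hf⟩
      rcases ih ht with ht' | ⟨c₁, hc₁, c₂, hc₂, p, q, h₁, h₂, hpq⟩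
      · exact Or.inl ⟨f, hf', z, hz, hu, ht'⟩
      · exact Or.inr ⟨c₁, hc₁, c₂, hc₂, p + 1, q, ⟨f, hf', z, hz, hu, h₁⟩, h₂, by omega⟩

end Walks

section DeletedEdge

variable {n : ℕ} {E : Finset (Finset (Fin n))} {e : Finset (Fin n)} {w : Fin n} {α D : ℕ}

theorem exists_mem_add_hdist_erase_lt {z : Fin n} (hwz : ∃ k, hconn E k w z)
    (hD : hdist E w z ≤ D) (hα : ∀ c ∈ e, α ≤ hdist (E.erase e) w c)
    (hz : D < hdist (E.erase e) w z) : ∃ c ∈ e, α + hdist (E.erase e) c z < D := by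
  rcases hconn_erase_or e (hconn_hdist hwz) with h | ⟨c₁, hc₁, c₂, hc₂, p, q, h₁, h₂, hpq⟩
  · exact absurd (hdist_le h) (by omega)
  · exact ⟨c₂, hc₂, by linarith [hα c₁ hc₁, hdist_le h₁, hdist_le h₂]⟩

theorem exists_mem_hdist_erase_mem_Ioc (hc' : HConnected (E.erase e))
    (hfar : ∀ z, D < hdist (E.erase e) w z → ∃ c ∈ e, α + hdist (E.erase e) c z < D)
    {A : ℕ} (hA : α ≤ A) {v : Fin n} (hv : v ∈ e) (hAv : A < hdist (E.erase e) w v) :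
    ∃ c ∈ e, A < hdist (E.erase e) w c ∧ hdist (E.erase e) w c ≤ A + 2 * (D - α) := by
  by_cases hv' : hdist (E.erase e) w v ≤ A + 2 * (D - α)
  · exact ⟨v, hv, hAv, hv'⟩
  obtain ⟨z, hz⟩ := exists_hdist_eq (i := A + (D - α) + 1) (hc' w v) (by omega)
  obtain ⟨c, hc, hcz⟩ := hfar z (by omega)
  have hwc := hdist_triangle (hc' w z) (hc' z c)
  have hwz := hdist_triangle (hc' w c) (hc' c z)
  rw [hdist_comm z c] at hwc
  exact ⟨c, hc, by omega, by omega⟩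

end DeletedEdge

theorem stmt_13 (n r : ℕ) (hr : 2 ≤ r) (E : Finset (Finset (Fin n)))
    (hu : ∀ e ∈ E, e.card = r) (hc : HConnected E) (D : ℕ) (hD : hdiam E = D)
    (e : Finset (Fin n)) (he : e ∈ E) (hc' : HConnected (E.erase e))
    (w : Fin n) :
    ∑ v ∈ e, hdist (E.erase e) w v ≤ r * (r - 1) * (D + 1) := by
  have hne : e.Nonempty := Finset.card_pos.mp (by rw [hu e he]; omega)
  obtain ⟨a, ha, hα⟩ := Finset.exists_min_image e (hdist (E.erase e) w) hne
  set α := hdist (E.erase e) w a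
  have hfar (z : Fin n) (hz : D < hdist (E.erase e) w z) :
      ∃ c ∈ e, α + hdist (E.erase e) c z < D :=
    exists_mem_add_hdist_erase_lt (hc w z) (hD ▸ hdist_le_hdiam w z) hα hz
  obtain ⟨δ, rfl⟩ : ∃ δ, D = α + δ := by
    refine ⟨D - α, (Nat.add_sub_of_le ?_).symm⟩
    by_contra! h
    obtain ⟨c, -, hc⟩ := hfar a h
    omega
  have hsum := two_mul_sum_le_of_gap_le ha le_rfl fun A hA ⟨v, hv, hAv⟩ =>
    exists_mem_hdist_erase_mem_Ioc hc' hfar hA hv hAv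
  obtain ⟨q, rfl⟩ : ∃ q, r = q + 1 := ⟨r - 1, by omega⟩
  rw [hu e he, Nat.add_sub_cancel_left, Nat.add_sub_cancel] at hsum
  rw [Nat.add_sub_cancel]
  nlinarith [Nat.mul_le_mul_left ((q + 1) * α) (show 1 ≤ q by omega)]
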